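/- For s ∈ {0,1}, the alternating series (1/(q;q)_∞) · Σ_{n∈ℤ} ( q^{n(10n+1+2s)} − q^{(2n+1)(5n+2−s)} ) equals Σ_{n=0}^∞ q^{n²+sn}/(q;q)_n, as formal power series in q. -/

import Mathlib

/-!
Andrews' Schur-polynomial argument. The fermionic polynomials
`Σ_n q^{n²+sn} [N-n, n]_q` and the bosonic polynomials
`Σ_j (-1)^j q^{j(5j+1+2s)/2} [N+s, ⌊(N-5j)/2⌋]_q` both satisfy
`X_{N+2} = X_{N+1} + q^{N+s+1} X_N` with `X_0 = X_1 = 1`: the first by the q-Pascal rule, the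
second because the recurrence defects of the terms `j` and `j+1` cancel whenever `N - 5j` is odd.
So they coincide. As `N → ∞`, coefficientwise, `[N-n, n]_q → 1/(q;q)_n` and
`[N+s, ⌊(N-5j)/2⌋]_q → 1/(q;q)_∞`, giving the two sides; splitting `j` by parity into
`j = 2n` and `j = -(2n+1)` yields the bilateral sum of the statement.
All limits are computed through congruences modulo `q^d`.
-/

noncomputable instance : TopologicalSpace (PowerSeries ℚ) :=
  TopologicalSpace.induced (fun f (n : ℕ) => (PowerSeries.coeff n) f) inferInstance

noncomputable def q : PowerSeries ℚ := PowerSeries.X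

/-- `(q;q)_n` -/
noncomputable def poch (n : ℕ) : PowerSeries ℚ :=
  ∏ i ∈ Finset.range n, (1 - q ^ (i + 1))

/-- `(q;q)_∞` -/
noncomputable def pochInf : PowerSeries ℚ := ∏' i : ℕ, (1 - q ^ (i + 1))

open PowerSeries Filter Topology Finset

theorem tendsto_iff_coeff_tendsto {ι : Type*} {l : Filter ι} {f : ι → PowerSeries ℚ}
    {g : PowerSeries ℚ} :
    Tendsto f l (𝓝 g) ↔ ∀ m, Tendsto (fun i => coeff m (f i)) l (𝓝 (coeff m g)) := by
  rw [nhds_induced, tendsto_comap_iff, tendsto_pi_nhds]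
  rfl

instance : T2Space (PowerSeries ℚ) :=
  (Topology.IsEmbedding.mk ⟨rfl⟩ fun _ _ h => PowerSeries.ext (congrFun h)).t2Space

theorem smodEq_iff_coeff_eq {d : ℕ} {f g : PowerSeries ℚ} :
    f ≡ g [SMOD Ideal.span {q ^ d}] ↔ ∀ m < d, coeff m f = coeff m g := by
  simp only [SModEq.sub_mem, Ideal.mem_span_singleton, q, X_pow_dvd_iff, map_sub, sub_eq_zero]

theorem q_pow_mul_smodEq_zero {d e : ℕ} (h : d ≤ e) (f : PowerSeries ℚ) :
    q ^ e * f ≡ 0 [SMOD Ideal.span {q ^ d}] :=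
  SModEq.zero.2 <| Ideal.mem_span_singleton.2 <| (pow_dvd_pow q h).mul_right f

theorem eq_of_forall_smodEq {f g : PowerSeries ℚ}
    (h : ∀ d, f ≡ g [SMOD Ideal.span {q ^ d}]) : f = g :=
  ext fun m => smodEq_iff_coeff_eq.1 (h (m + 1)) m m.lt_succ_self

theorem tendsto_of_forall_smodEq {ι : Type*} {l : Filter ι} {f : ι → PowerSeries ℚ}
    {g : PowerSeries ℚ} (h : ∀ d, ∀ᶠ i in l, f i ≡ g [SMOD Ideal.span {q ^ d}]) :
    Tendsto f l (𝓝 g) :=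
  tendsto_iff_coeff_tendsto.2 fun m => tendsto_const_nhds.congr' <|
    (h (m + 1)).mono fun _ hi => (smodEq_iff_coeff_eq.1 hi m m.lt_succ_self).symm

theorem exists_tendsto_of_forall_smodEq {ι : Type*} {l : Filter ι} {f : ι → PowerSeries ℚ}
    (c : ℕ → PowerSeries ℚ) (h : ∀ d, ∀ᶠ i in l, f i ≡ c d [SMOD Ideal.span {q ^ d}]) :
    ∃ g, Tendsto f l (𝓝 g) :=
  ⟨mk fun m => coeff m (c (m + 1)), tendsto_iff_coeff_tendsto.2 fun m =>
    tendsto_const_nhds.congr' <| (h (m + 1)).mono fun _ hi => by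
      rw [coeff_mk]; exact (smodEq_iff_coeff_eq.1 hi m m.lt_succ_self).symm⟩

theorem smodEq_of_tendsto {ι : Type*} {l : Filter ι} [l.NeBot] {f : ι → PowerSeries ℚ}
    {g c : PowerSeries ℚ} {d : ℕ} (hf : Tendsto f l (𝓝 g))
    (h : ∀ᶠ i in l, f i ≡ c [SMOD Ideal.span {q ^ d}]) : g ≡ c [SMOD Ideal.span {q ^ d}] :=
  smodEq_iff_coeff_eq.2 fun m hm => tendsto_nhds_unique (tendsto_iff_coeff_tendsto.1 hf m) <|
    tendsto_const_nhds.congr' <| h.mono fun _ hi => (smodEq_iff_coeff_eq.1 hi m hm).symm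

section Subset

variable {ι : Type*} {s t : Finset ι}

theorem sum_smodEq_sum_of_subset {R M : Type*} [Ring R] [AddCommGroup M] [Module R M]
    {U : Submodule R M} {g : ι → M} (hst : s ⊆ t) (h : ∀ i ∈ t, i ∉ s → g i ≡ 0 [SMOD U]) :
    ∑ i ∈ t, g i ≡ ∑ i ∈ s, g i [SMOD U] := by
  classical
  rw [← sum_sdiff hst]
  simpa using (SModEq.sum fun i hi => h i (mem_sdiff.1 hi).1 (mem_sdiff.1 hi).2).add
    (SModEq.refl (∑ i ∈ s, g i))

theorem prod_smodEq_prod_of_subset {A : Type*} [CommRing A] {I : Ideal A} {f : ι → A}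
    (hst : s ⊆ t) (h : ∀ i ∈ t, i ∉ s → f i ≡ 1 [SMOD I]) :
    ∏ i ∈ t, f i ≡ ∏ i ∈ s, f i [SMOD I] := by
  classical
  rw [← prod_sdiff hst]
  simpa using (SModEq.prod fun i hi => h i (mem_sdiff.1 hi).1 (mem_sdiff.1 hi).2).mul
    (SModEq.refl (∏ i ∈ s, f i))

end Subset

theorem finsum_eq_zero_of_add_succ_eq_zero {M : Type*} [AddCommGroup M] {f : ℤ → M}
    (hf : f.HasFiniteSupport) {p : ℤ → Prop} [DecidablePred p] (hp : ∀ j, p (j + 1) ↔ ¬ p j)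
    (h : ∀ j, p j → f j + f (j + 1) = 0) : ∑ᶠ j, f j = 0 := by
  -- `f` telescopes against its restriction `v` to `p`, and `∑ᶠ` is invariant under shifts.
  set v : ℤ → M := fun j => if p j then f j else 0
  have hv : v.HasFiniteSupport :=
    hf.subset fun j => by simp only [Function.mem_support, v]; split_ifs <;> tauto
  have hfv : ∀ j, f j = v j - v (j - 1) := fun j => by
    have hpj := hp (j - 1)
    rw [sub_add_cancel] at hpj
    by_cases hj : p j
    · simp [v, hj, hpj.1 hj]
    · have := h (j - 1) (not_not.1 (mt hpj.2 hj))
      rw [sub_add_cancel] at this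
      simp only [v, hj, if_false, not_not.1 (mt hpj.2 hj), if_true]
      rw [← this]; abel
  rw [finsum_congr hfv, finsum_sub_distrib (g := fun j => v (j - 1)) hv
      (hv.comp_of_injective (sub_left_injective (b := 1))),
    show ∑ᶠ j, v (j - 1) = ∑ᶠ j, v j from finsum_comp_equiv (Equiv.subRight 1), sub_self]

theorem sum_even_add_neg_odd {M : Type*} [AddCommMonoid M] (f : ℤ → M) (S : Finset ℤ) :
    ∑ n ∈ S, (f (2 * n) + f (-(2 * n + 1))) =
      ∑ j ∈ S.image (2 * ·) ∪ S.image (fun n => -(2 * n + 1)), f j := by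
  rw [sum_union, sum_image, sum_image, sum_add_distrib]
  · exact fun a _ b _ h => by simpa using h
  · exact fun a _ b _ h => by simpa using h
  · simp only [disjoint_left, mem_image]
    rintro _ ⟨a, _, rfl⟩ ⟨b, _, h⟩
    omega

section Series

variable {ι : Type*} {d : ℕ}

theorem summable_of_forall_smodEq_zero {g : ι → PowerSeries ℚ}
    (h : ∀ d, ∃ S : Finset ι, ∀ i ∉ S, g i ≡ 0 [SMOD Ideal.span {q ^ d}]) : Summable g := by
  choose S hS using h
  exact exists_tendsto_of_forall_smodEq (fun d => ∑ i ∈ S d, g i) fun d =>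
    (eventually_ge_atTop (S d)).mono fun _ hT =>
      sum_smodEq_sum_of_subset hT fun i _ hi => hS d i hi

theorem HasSum.smodEq_sum {g : ι → PowerSeries ℚ} {L : PowerSeries ℚ} (hg : HasSum g L)
    {S : Finset ι} (hS : ∀ i ∉ S, g i ≡ 0 [SMOD Ideal.span {q ^ d}]) :
    L ≡ ∑ i ∈ S, g i [SMOD Ideal.span {q ^ d}] :=
  smodEq_of_tendsto hg <| (eventually_ge_atTop S).mono fun _ hT =>
    sum_smodEq_sum_of_subset hT fun i _ hi => hS i hi

theorem multipliable_of_forall_smodEq_one {f : ι → PowerSeries ℚ}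
    (h : ∀ d, ∃ S : Finset ι, ∀ i ∉ S, f i ≡ 1 [SMOD Ideal.span {q ^ d}]) : Multipliable f := by
  choose S hS using h
  exact exists_tendsto_of_forall_smodEq (fun d => ∏ i ∈ S d, f i) fun d =>
    (eventually_ge_atTop (S d)).mono fun _ hT =>
      prod_smodEq_prod_of_subset hT fun i _ hi => hS d i hi

theorem HasProd.smodEq_prod {f : ι → PowerSeries ℚ} {P : PowerSeries ℚ} (hf : HasProd f P)
    {S : Finset ι} (hS : ∀ i ∉ S, f i ≡ 1 [SMOD Ideal.span {q ^ d}]) :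
    P ≡ ∏ i ∈ S, f i [SMOD Ideal.span {q ^ d}] :=
  smodEq_of_tendsto hf <| (eventually_ge_atTop S).mono fun _ hT =>
    prod_smodEq_prod_of_subset hT fun i _ hi => hS i hi

theorem tsum_even_add_neg_odd {f : ℤ → PowerSeries ℚ}
    (hf : ∀ d j, d ≤ j.natAbs → f j ≡ 0 [SMOD Ideal.span {q ^ d}]) :
    ∑' n : ℤ, (f (2 * n) + f (-(2 * n + 1))) = ∑' j, f j := by
  have hpair (d : ℕ) (n : ℤ) (h : d ≤ n.natAbs) :
      f (2 * n) + f (-(2 * n + 1)) ≡ 0 [SMOD Ideal.span {q ^ d}] := by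
    simpa using (hf d _ (by omega)).add (hf d _ (by omega))
  have hsum₁ := (summable_of_forall_smodEq_zero (g := fun n => f (2 * n) + f (-(2 * n + 1)))
    fun d => ⟨Icc (-(d : ℤ)) d, fun n hn => hpair d n (by simp at hn; omega)⟩).hasSum
  have hsum₂ := (summable_of_forall_smodEq_zero (g := f)
    fun d => ⟨Icc (-(d : ℤ)) d, fun j hj => hf d j (by simp at hj; omega)⟩).hasSum
  refine eq_of_forall_smodEq fun d => ?_
  calc ∑' n : ℤ, (f (2 * n) + f (-(2 * n + 1)))
      ≡ ∑ n ∈ Icc (-(d : ℤ)) d, (f (2 * n) + f (-(2 * n + 1))) [SMOD Ideal.span {q ^ d}] :=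
        hsum₁.smodEq_sum fun n hn => hpair d n (by simp at hn; omega)
    _ = ∑ j ∈ (Icc (-(d : ℤ)) d).image (2 * ·) ∪ (Icc (-(d : ℤ)) d).image (fun n => -(2 * n + 1)),
          f j := sum_even_add_neg_odd f _
    _ ≡ ∑' j, f j [SMOD Ideal.span {q ^ d}] := (hsum₂.smodEq_sum fun j hj => hf d j <| by
        by_contra! hlt
        rcases Int.even_or_odd' j with ⟨k, rfl | rfl⟩
        · exact hj (mem_union_left _ (mem_image.2 ⟨k, by simp; omega, rfl⟩))
        · exact hj (mem_union_right _ (mem_image.2 ⟨-k - 1, by simp; omega, by ring⟩))).symm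

end Series

theorem inv_smodEq_inv {k : Type*} [Field k] {I : Ideal (PowerSeries k)} {a b : PowerSeries k}
    (ha : constantCoeff a ≠ 0) (hb : constantCoeff b ≠ 0) (h : a ≡ b [SMOD I]) :
    a⁻¹ ≡ b⁻¹ [SMOD I] := by
  have := (SModEq.refl a⁻¹).mul (h.symm.mul (SModEq.refl b⁻¹))
  rwa [PowerSeries.mul_inv_cancel _ hb, ← mul_assoc, PowerSeries.inv_mul_cancel _ ha, one_mul,
    mul_one] at this

theorem one_sub_q_pow_smodEq_one {d e : ℕ} (h : d ≤ e) :
    1 - q ^ e ≡ 1 [SMOD Ideal.span {q ^ d}] := by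
  have := (SModEq.refl 1).sub (q_pow_mul_smodEq_zero h 1)
  rwa [mul_one, sub_zero] at this

theorem constantCoeff_poch (n : ℕ) : constantCoeff (poch n) = 1 := by
  simp [poch, q, map_prod]

theorem poch_succ (n : ℕ) : poch (n + 1) = poch n * (1 - q ^ (n + 1)) :=
  prod_range_succ _ n

theorem poch_smodEq_poch {d n : ℕ} (h : d ≤ n) : poch n ≡ poch d [SMOD Ideal.span {q ^ d}] :=
  prod_smodEq_prod_of_subset (range_subset_range.2 h) fun i _ hi =>
    one_sub_q_pow_smodEq_one (by simp at hi; omega)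

theorem hasProd_pochInf : HasProd (fun i : ℕ => 1 - q ^ (i + 1)) pochInf :=
  (multipliable_of_forall_smodEq_one fun d => ⟨range d, fun i hi =>
    one_sub_q_pow_smodEq_one (by simp at hi; omega)⟩).hasProd

theorem pochInf_smodEq_poch {d n : ℕ} (h : d ≤ n) : pochInf ≡ poch n [SMOD Ideal.span {q ^ d}] :=
  hasProd_pochInf.smodEq_prod fun i hi => one_sub_q_pow_smodEq_one (by simp at hi; omega)

theorem constantCoeff_pochInf : constantCoeff pochInf = 1 := by
  rw [← coeff_zero_eq_constantCoeff_apply,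
    smodEq_iff_coeff_eq.1 (pochInf_smodEq_poch (le_refl 1)) 0 one_pos,
    coeff_zero_eq_constantCoeff_apply, constantCoeff_poch]

-- `1/(q;q)_k`, extended by `0` to `k < 0`: then `qBinom n k` vanishes outside `0 ≤ k ≤ n`, and the
-- q-Pascal rules below need no boundary cases.
noncomputable def pochInv (k : ℤ) : PowerSeries ℚ := if 0 ≤ k then (poch k.toNat)⁻¹ else 0

@[simp]
theorem pochInv_natCast (n : ℕ) : pochInv n = (poch n)⁻¹ := by
  simp [pochInv]

theorem pochInv_of_neg {k : ℤ} (h : k < 0) : pochInv k = 0 := by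
  simp [pochInv, not_le.2 h]

theorem pochInv_eq_mul_pochInv_add_one (k : ℤ) :
    pochInv k = (1 - q ^ (k + 1).toNat) * pochInv (k + 1) := by
  rcases lt_or_ge k 0 with hk | hk
  · rcases (by omega : k = -1 ∨ k + 1 < 0) with rfl | hk'
    · simp [pochInv_of_neg hk]
    · simp [pochInv_of_neg hk, pochInv_of_neg hk']
  · lift k to ℕ using hk
    have hunit : constantCoeff (poch (k + 1)) ≠ 0 := by simp [constantCoeff_poch]
    rw [pochInv_natCast, show (k : ℤ) + 1 = ((k + 1 : ℕ) : ℤ) by push_cast; ring, pochInv_natCast,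
      Int.toNat_natCast, eq_comm, PowerSeries.eq_inv_iff_mul_eq_one (by simp [constantCoeff_poch]),
      mul_comm, ← mul_assoc, ← poch_succ, PowerSeries.mul_inv_cancel _ hunit]

theorem pochInv_smodEq_pochInf_inv {d : ℕ} {k : ℤ} (h : (d : ℤ) ≤ k) :
    pochInv k ≡ pochInf⁻¹ [SMOD Ideal.span {q ^ d}] := by
  lift k to ℕ using (Int.natCast_nonneg d).trans h
  rw [pochInv_natCast]
  exact inv_smodEq_inv (by simp [constantCoeff_poch]) (by simp [constantCoeff_pochInf])
    (pochInf_smodEq_poch (by omega)).symm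

noncomputable def qBinom (n : ℕ) (k : ℤ) : PowerSeries ℚ := poch n * pochInv k * pochInv (n - k)

theorem qBinom_of_neg {n : ℕ} {k : ℤ} (h : k < 0) : qBinom n k = 0 := by
  simp [qBinom, pochInv_of_neg h]

theorem qBinom_of_lt {n : ℕ} {k : ℤ} (h : (n : ℤ) < k) : qBinom n k = 0 := by
  simp [qBinom, pochInv_of_neg (sub_neg.2 h)]

theorem qBinom_zero_right (n : ℕ) : qBinom n 0 = 1 := by
  rw [qBinom, show pochInv 0 = 1 by simp [pochInv, poch], mul_one, sub_zero, pochInv_natCast,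
    PowerSeries.mul_inv_cancel _ (by simp [constantCoeff_poch])]

theorem qBinom_sub_right (n : ℕ) (k : ℤ) : qBinom n (n - k) = qBinom n k := by
  rw [qBinom, qBinom, sub_sub_cancel, mul_right_comm]

theorem q_pow_mul_pochInv_mul_pochInv_congr {a b : ℤ} {e f : ℕ} (h : 0 ≤ a → 0 ≤ b → e = f) :
    q ^ e * (pochInv a * pochInv b) = q ^ f * (pochInv a * pochInv b) := by
  by_cases ha : 0 ≤ a
  · by_cases hb : 0 ≤ b
    · rw [h ha hb]
    · simp [pochInv_of_neg (not_le.1 hb)]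
  · simp [pochInv_of_neg (not_le.1 ha)]

theorem q_pow_mul_qBinom_congr {n : ℕ} {k : ℤ} {e f : ℕ} (h : 0 ≤ k → k ≤ n → e = f) :
    q ^ e * qBinom n k = q ^ f * qBinom n k := by
  have := q_pow_mul_pochInv_mul_pochInv_congr (a := k) (b := n - k) (e := e) (f := f)
    fun h1 h2 => h h1 (by omega)
  rw [qBinom, mul_assoc (poch n)]
  linear_combination poch n * this

theorem qBinom_succ (n : ℕ) (k : ℤ) :
    qBinom (n + 1) k = qBinom n (k - 1) + q ^ k.toNat * qBinom n k := by
  have hcongr := q_pow_mul_pochInv_mul_pochInv_congr (a := k) (b := n + 1 - k)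
    (e := k.toNat + (n + 1 - k).toNat) (f := n + 1) (by omega)
  have h1 := pochInv_eq_mul_pochInv_add_one (k - 1)
  have h2 := pochInv_eq_mul_pochInv_add_one (n - k)
  rw [sub_add_cancel] at h1
  rw [show (n : ℤ) - k + 1 = n + 1 - k by ring] at h2
  simp only [qBinom, poch_succ, h1, h2, show (n : ℤ) - (k - 1) = n + 1 - k by ring,
    Nat.cast_add, Nat.cast_one]
  rw [pow_add] at hcongr
  linear_combination poch n * hcongr

theorem qBinom_succ' (n : ℕ) (k : ℤ) :
    qBinom (n + 1) k = qBinom n k + q ^ (n + 1 - k).toNat * qBinom n (k - 1) := by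
  rw [← qBinom_sub_right, Nat.cast_add, Nat.cast_one, qBinom_succ,
    ← qBinom_sub_right n (n + 1 - k - 1), ← qBinom_sub_right n (n + 1 - k)]
  ring_nf

theorem qBinom_smodEq_pochInv {n d : ℕ} {k : ℤ} (h : (d : ℤ) ≤ n - k) :
    qBinom n k ≡ pochInv k [SMOD Ideal.span {q ^ d}] := by
  rcases lt_or_ge k 0 with hk | hk
  · rw [qBinom_of_neg hk, pochInv_of_neg hk]
  lift k to ℕ using hk
  have hnk : (n : ℤ) - k = (n - k : ℕ) := by push_cast [show k ≤ n by omega]; ring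
  have hunit : constantCoeff (poch (n - k)) ≠ 0 := by simp [constantCoeff_poch]
  have := (SModEq.refl (pochInv k)).mul <| ((poch_smodEq_poch (show d ≤ n by omega)).trans
    (poch_smodEq_poch (show d ≤ n - k by omega)).symm).mul (SModEq.refl (poch (n - k))⁻¹)
  rwa [PowerSeries.mul_inv_cancel _ hunit, mul_one, ← mul_assoc, mul_comm (pochInv k),
    ← pochInv_natCast, ← hnk] at this

theorem qBinom_add_two_sub (n : ℕ) (k : ℤ) :
    qBinom (n + 2) k - qBinom (n + 1) k - q ^ (n + 1) * qBinom n (k - 1) =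
      q ^ (n + 2 - k).toNat * qBinom n (k - 2) := by
  have hc := q_pow_mul_qBinom_congr (n := n) (k := k - 1)
    (e := (n + 2 - k).toNat + (k - 1).toNat) (f := n + 1) (by omega)
  have hB := qBinom_succ' (n + 1) k
  have hA := qBinom_succ n (k - 1)
  rw [show k - 1 - 1 = k - 2 by ring] at hA
  push_cast at hB
  rw [show (n : ℤ) + 1 + 1 - k = n + 2 - k by ring] at hB
  rw [pow_add] at hc
  linear_combination hB + q ^ (n + 2 - k).toNat * hA + hc

theorem qBinom_add_two_sub' (n : ℕ) (k : ℤ) :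
    qBinom (n + 2) k - qBinom (n + 1) (k - 1) - q ^ (n + 1) * qBinom n (k - 1) =
      q ^ k.toNat * qBinom n k := by
  have hc := q_pow_mul_qBinom_congr (n := n) (k := k - 1)
    (e := k.toNat + (n + 1 - k).toNat) (f := n + 1) (by omega)
  have hA := qBinom_succ (n + 1) k
  have hB := qBinom_succ' n k
  rw [pow_add] at hc
  linear_combination hA + q ^ k.toNat * hB + hc

-- `j(5j+1+2s)/2`; for `s ≤ 1` the numerator is even and nonnegative, so `/` and `toNat` are exact.
def thetaExp (s : ℕ) (j : ℤ) : ℕ := (j * (5 * j + 1 + 2 * s) / 2).toNat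

noncomputable def thetaTerm (s : ℕ) (j : ℤ) : PowerSeries ℚ := (j.negOnePow : ℤ) * q ^ thetaExp s j

theorem two_mul_thetaExp {s : ℕ} (hs : s ≤ 1) (j : ℤ) :
    2 * (thetaExp s j : ℤ) = j * (5 * j + 1 + 2 * s) := by
  obtain ⟨c, hc⟩ := Int.even_mul_succ_self j
  have hs' : (s : ℤ) ≤ 1 := by exact_mod_cast hs
  have hnonneg : 0 ≤ j * (5 * j + 1 + 2 * s) := by
    rcases le_or_gt 0 j with h | h
    · positivity
    · nlinarith
  have heven : j * (5 * j + 1 + 2 * s) = 2 * (2 * j * j + c + s * j) := by linear_combination hc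
  rw [thetaExp]
  omega

theorem thetaExp_add_one {s : ℕ} (hs : s ≤ 1) (j : ℤ) :
    (thetaExp s (j + 1) : ℤ) = thetaExp s j + 5 * j + 3 + s := by
  have h := two_mul_thetaExp hs j
  have h' := two_mul_thetaExp hs (j + 1)
  linarith

theorem natAbs_le_thetaExp {s : ℕ} (hs : s ≤ 1) (j : ℤ) : j.natAbs ≤ thetaExp s j := by
  have h := two_mul_thetaExp hs j
  have hs' : (s : ℤ) ≤ 1 := by exact_mod_cast hs
  have hs0 : (0 : ℤ) ≤ s := by positivity
  zify
  rcases le_or_gt 0 j with hj | hj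
  · rw [abs_of_nonneg hj]; nlinarith
  · rw [abs_of_neg hj]; nlinarith

theorem thetaTerm_smodEq_zero {s : ℕ} (hs : s ≤ 1) {d : ℕ} {j : ℤ} (h : d ≤ j.natAbs) :
    thetaTerm s j ≡ 0 [SMOD Ideal.span {q ^ d}] := by
  rw [thetaTerm, mul_comm]
  exact q_pow_mul_smodEq_zero (h.trans (natAbs_le_thetaExp hs j)) _

theorem q_pow_sub_q_pow_eq_thetaTerm_add_thetaTerm {s : ℕ} (hs : s ≤ 1) (n : ℤ) :
    q ^ ((n * (10 * n + 1 + 2 * (s : ℤ))).toNat) -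
        q ^ (((2 * n + 1) * (5 * n + 2 - (s : ℤ))).toNat) =
      thetaTerm s (2 * n) + thetaTerm s (-(2 * n + 1)) := by
  have heven := two_mul_thetaExp hs (2 * n)
  have hodd := two_mul_thetaExp hs (-(2 * n + 1))
  rw [show 2 * n * (5 * (2 * n) + 1 + 2 * s) = 2 * (n * (10 * n + 1 + 2 * s)) by ring] at heven
  rw [show -(2 * n + 1) * (5 * -(2 * n + 1) + 1 + 2 * s) =
    2 * ((2 * n + 1) * (5 * n + 2 - s)) by ring] at hodd
  rw [thetaTerm, thetaTerm, Int.negOnePow_two_mul, Int.negOnePow_neg,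
    Int.negOnePow_two_mul_add_one,
    show (n * (10 * n + 1 + 2 * (s : ℤ))).toNat = thetaExp s (2 * n) by omega,
    show ((2 * n + 1) * (5 * n + 2 - (s : ℤ))).toNat = thetaExp s (-(2 * n + 1)) by omega]
  simp [sub_eq_add_neg]

noncomputable def bosonicTerm (s N : ℕ) (j : ℤ) : PowerSeries ℚ :=
  thetaTerm s j * qBinom (N + s) ((N - 5 * j) / 2)

noncomputable def bosonic (s N : ℕ) : PowerSeries ℚ := ∑ᶠ j : ℤ, bosonicTerm s N j

theorem support_bosonicTerm_subset (s N : ℕ) :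
    Function.support (bosonicTerm s N) ⊆ Set.Icc (-(N : ℤ) - s - 1) N := by
  intro j hj
  by_contra hmem
  apply hj
  rw [Set.mem_Icc, not_and_or, not_le, not_le] at hmem
  rcases hmem with h | h
  · rw [bosonicTerm, qBinom_of_lt (by push_cast; omega), mul_zero]
  · rw [bosonicTerm, qBinom_of_neg (by omega), mul_zero]

theorem hasFiniteSupport_bosonicTerm (s N : ℕ) : (bosonicTerm s N).HasFiniteSupport :=
  (Set.finite_Icc _ _).subset (support_bosonicTerm_subset s N)

theorem bosonic_eq_sum_Icc (s N : ℕ) :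
    bosonic s N = ∑ j ∈ Icc (-(N : ℤ) - s - 1) N, bosonicTerm s N j :=
  finsum_eq_sum_of_support_subset _ <| by rw [coe_Icc]; exact support_bosonicTerm_subset s N

theorem bosonic_of_le_one {s : ℕ} (hs : s ≤ 1) {N : ℕ} (hN : N ≤ 1) : bosonic s N = 1 := by
  rw [bosonic, finsum_eq_single _ 0 fun j hj => ?_]
  · simp [bosonicTerm, thetaTerm, thetaExp, show (N : ℤ) / 2 = 0 by omega, qBinom_zero_right]
  · rcases lt_or_gt_of_ne hj with h | h
    · rw [bosonicTerm, qBinom_of_lt (by push_cast; omega), mul_zero]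
    · rw [bosonicTerm, qBinom_of_neg (by omega), mul_zero]

theorem bosonicTerm_rec_add_rec_succ_eq_zero {s : ℕ} (hs : s ≤ 1) (N : ℕ) {j : ℤ}
    (hj : Odd ((N : ℤ) - 5 * j)) :
    (bosonicTerm s (N + 2) j - bosonicTerm s (N + 1) j - q ^ (N + s + 1) * bosonicTerm s N j) +
      (bosonicTerm s (N + 2) (j + 1) - bosonicTerm s (N + 1) (j + 1) -
        q ^ (N + s + 1) * bosonicTerm s N (j + 1)) = 0 := by
  obtain ⟨k, hk⟩ : ∃ k, (N : ℤ) - 5 * j = 2 * k - 1 := by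
    obtain ⟨m, hm⟩ := hj; exact ⟨m + 1, by omega⟩
  -- Both defects are multiples of `qBinom (N + s) (k - 2)`; `hc` matches their exponents.
  have h1 := qBinom_add_two_sub (N + s) k
  have h2 := qBinom_add_two_sub' (N + s) (k - 2)
  have hc := q_pow_mul_qBinom_congr (n := N + s) (k := k - 2)
    (e := thetaExp s j + ((N + s : ℕ) + 2 - k).toNat) (f := thetaExp s (j + 1) + (k - 2).toNat)
    (by have := thetaExp_add_one hs j; push_cast; omega)
  rw [show k - 2 - 1 = k - 3 by ring] at h2
  rw [pow_add, pow_add] at hc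
  simp only [bosonicTerm, thetaTerm, Int.negOnePow_succ, Units.val_neg, Int.cast_neg,
    show N + 2 + s = N + s + 2 by ring, show N + 1 + s = N + s + 1 by ring, Nat.cast_add,
    Nat.cast_ofNat, Nat.cast_one, show ((N : ℤ) + 2 - 5 * j) / 2 = k by omega,
    show ((N : ℤ) + 1 - 5 * j) / 2 = k by omega, show ((N : ℤ) - 5 * j) / 2 = k - 1 by omega,
    show ((N : ℤ) + 2 - 5 * (j + 1)) / 2 = k - 2 by omega,
    show ((N : ℤ) + 1 - 5 * (j + 1)) / 2 = k - 3 by omega,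
    show ((N : ℤ) - 5 * (j + 1)) / 2 = k - 3 by omega]
  linear_combination
    (j.negOnePow : PowerSeries ℚ) * (q ^ thetaExp s j * h1 - q ^ thetaExp s (j + 1) * h2 + hc)

theorem bosonic_add_two {s : ℕ} (hs : s ≤ 1) (N : ℕ) :
    bosonic s (N + 2) = bosonic s (N + 1) + q ^ (N + s + 1) * bosonic s N := by
  have hfin := hasFiniteSupport_bosonicTerm s
  have hsum := finsum_eq_zero_of_add_succ_eq_zero
    (((hfin (N + 2)).fun_sub (hfin (N + 1))).fun_sub ((hfin N).fun_mul_right _))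
    (p := fun j => Odd ((N : ℤ) - 5 * j)) (fun j => by simp only [Int.odd_iff]; omega)
    (fun j hj => bosonicTerm_rec_add_rec_succ_eq_zero hs N hj)
  rw [finsum_sub_distrib ((hfin (N + 2)).fun_sub (hfin (N + 1))) ((hfin N).fun_mul_right _),
    finsum_sub_distrib (hfin (N + 2)) (hfin (N + 1)), ← mul_finsum' _ _ (hfin N)] at hsum
  rw [bosonic, bosonic, bosonic]
  linear_combination hsum

noncomputable def fermionic (s N : ℕ) : PowerSeries ℚ :=
  ∑ n ∈ range (N + 1), q ^ (n ^ 2 + s * n) * qBinom (N - n) n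

theorem fermionic_of_le_one (s : ℕ) {N : ℕ} (hN : N ≤ 1) : fermionic s N = 1 := by
  interval_cases N <;> simp [fermionic, sum_range_succ, qBinom_zero_right, qBinom_of_lt]

theorem fermionic_add_two (s N : ℕ) :
    fermionic s (N + 2) = fermionic s (N + 1) + q ^ (N + s + 1) * fermionic s N := by
  have hpascal : ∀ n ∈ range (N + 2), q ^ (n ^ 2 + s * n) * qBinom (N + 2 - n) n =
      q ^ (n ^ 2 + s * n) * qBinom (N + 1 - n) n +
        q ^ (n ^ 2 + s * n) *
          (q ^ ((N + 1 - n : ℕ) + 1 - n : ℤ).toNat * qBinom (N + 1 - n) (n - 1)) := by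
    intro n hn
    rw [show N + 2 - n = N + 1 - n + 1 by simp at hn; omega, qBinom_succ']
    ring
  have hshift : ∀ m ∈ range (N + 1),
      q ^ ((m + 1) ^ 2 + s * (m + 1)) *
        (q ^ ((N + 1 - (m + 1) : ℕ) + 1 - (m + 1 : ℕ) : ℤ).toNat *
          qBinom (N + 1 - (m + 1)) ((m + 1 : ℕ) - 1)) =
      q ^ (N + s + 1) * (q ^ (m ^ 2 + s * m) * qBinom (N - m) m) := by
    intro m hm
    simp only [Nat.add_sub_add_right, Nat.cast_add, Nat.cast_one, add_sub_cancel_right, ← mul_assoc,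
      ← pow_add]
    refine q_pow_mul_qBinom_congr fun _ hle => ?_
    simp at hm
    have : (m + 1) ^ 2 + s * (m + 1) = m ^ 2 + s * m + 2 * m + s + 1 := by ring
    omega
  rw [fermionic, sum_range_succ, Nat.sub_self, qBinom_of_lt (by push_cast; omega), mul_zero,
    add_zero, sum_congr rfl hpascal, sum_add_distrib]
  congr 1
  rw [sum_range_succ', sum_congr rfl hshift, ← mul_sum]
  simp [fermionic, qBinom_of_neg]

theorem fermionic_eq_bosonic {s : ℕ} (hs : s ≤ 1) : fermionic s = bosonic s := by
  funext N
  induction N using Nat.twoStepInduction with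
  | zero => rw [fermionic_of_le_one s zero_le_one, bosonic_of_le_one hs zero_le_one]
  | one => rw [fermionic_of_le_one s le_rfl, bosonic_of_le_one hs le_rfl]
  | more N h0 h1 => rw [fermionic_add_two, bosonic_add_two hs, h0, h1]

theorem tendsto_fermionic (s : ℕ) :
    Tendsto (fermionic s) atTop (𝓝 (∑' n : ℕ, q ^ (n ^ 2 + s * n) * (poch n)⁻¹)) := by
  have hterm {d n : ℕ} (h : d ≤ n) (f : PowerSeries ℚ) :
      q ^ (n ^ 2 + s * n) * f ≡ 0 [SMOD Ideal.span {q ^ d}] :=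
    q_pow_mul_smodEq_zero (by nlinarith) f
  have hsum := (summable_of_forall_smodEq_zero
    (g := fun n : ℕ => q ^ (n ^ 2 + s * n) * (poch n)⁻¹) fun d =>
      ⟨range d, fun n hn => hterm (by simpa using hn) _⟩).hasSum
  refine tendsto_of_forall_smodEq fun d => ?_
  filter_upwards [eventually_ge_atTop (3 * d)] with N hN
  calc fermionic s N
      ≡ ∑ n ∈ range d, q ^ (n ^ 2 + s * n) * qBinom (N - n) n [SMOD Ideal.span {q ^ d}] :=
        sum_smodEq_sum_of_subset (range_subset_range.2 (by omega)) fun n _ hn =>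
          hterm (by simpa using hn) _
    _ ≡ ∑ n ∈ range d, q ^ (n ^ 2 + s * n) * (poch n)⁻¹ [SMOD Ideal.span {q ^ d}] :=
        SModEq.sum fun n hn => (SModEq.refl _).mul <| by
          rw [← pochInv_natCast]
          exact qBinom_smodEq_pochInv (by simp at hn; push_cast [show n ≤ N by omega]; omega)
    _ ≡ ∑' n : ℕ, q ^ (n ^ 2 + s * n) * (poch n)⁻¹ [SMOD Ideal.span {q ^ d}] :=
        (hsum.smodEq_sum fun n hn => hterm (by simpa using hn) _).symm

theorem tendsto_bosonic {s : ℕ} (hs : s ≤ 1) :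
    Tendsto (bosonic s) atTop (𝓝 (pochInf⁻¹ * ∑' j : ℤ, thetaTerm s j)) := by
  have hsum := (summable_of_forall_smodEq_zero (g := thetaTerm s) fun d =>
    ⟨Icc (-(d : ℤ)) d, fun j hj => thetaTerm_smodEq_zero hs (by simp at hj; omega)⟩).hasSum
  refine tendsto_of_forall_smodEq fun d => ?_
  filter_upwards [eventually_ge_atTop (8 * d + 2)] with N hN
  calc bosonic s N
      = ∑ j ∈ Icc (-(N : ℤ) - s - 1) N, bosonicTerm s N j := bosonic_eq_sum_Icc s N
    _ ≡ ∑ j ∈ Icc (-(d : ℤ)) d, bosonicTerm s N j [SMOD Ideal.span {q ^ d}] :=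
        sum_smodEq_sum_of_subset (Icc_subset_Icc (by omega) (by omega)) fun j _ hj => by
          simpa [bosonicTerm] using (thetaTerm_smodEq_zero hs (by simp at hj; omega)).mul
            (SModEq.refl (qBinom (N + s) ((N - 5 * j) / 2)))
    _ ≡ ∑ j ∈ Icc (-(d : ℤ)) d, thetaTerm s j * pochInf⁻¹ [SMOD Ideal.span {q ^ d}] :=
        SModEq.sum fun j hj => (SModEq.refl _).mul <| by
          simp only [mem_Icc] at hj
          exact (qBinom_smodEq_pochInv (by push_cast; omega)).trans
            (pochInv_smodEq_pochInf_inv (by omega))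
    _ = pochInf⁻¹ * ∑ j ∈ Icc (-(d : ℤ)) d, thetaTerm s j := by
        rw [mul_sum]; simp_rw [mul_comm]
    _ ≡ pochInf⁻¹ * ∑' j : ℤ, thetaTerm s j [SMOD Ideal.span {q ^ d}] :=
        (SModEq.refl _).mul (hsum.smodEq_sum fun j hj =>
          thetaTerm_smodEq_zero hs (by simp at hj; omega)).symm

theorem rr_alternating_eq_sum (s : ℕ) (hs : s ≤ 1) :
    pochInf⁻¹ *
      (∑' n : ℤ, (q ^ ((n * (10 * n + 1 + 2 * (s : ℤ))).toNat)
        - q ^ (((2 * n + 1) * (5 * n + 2 - (s : ℤ))).toNat))) =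
    ∑' n : ℕ, q ^ (n ^ 2 + s * n) * (poch n)⁻¹ := by
  simp only [q_pow_sub_q_pow_eq_thetaTerm_add_thetaTerm hs]
  rw [tsum_even_add_neg_odd fun d j => thetaTerm_smodEq_zero hs]
  refine tendsto_nhds_unique (tendsto_bosonic hs) ?_
  rw [← fermionic_eq_bosonic hs]
  exact tendsto_fermionic s
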